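/- Let λ, μ be partitions of length n, and set λ^# = (λ_1,…,λ_n,0) and μ^# = (μ_1,…,μ_n,0), partitions of length n+1. Then u_{λ^#,μ^#}(q) = u_{λ,μ}(q) and U_{λ^#,μ^#}(q) = U_{λ,μ}(q), where the left-hand sides are the polynomials defined from ℤ^{n+1} (with S_{n+1} and ρ_{n+1} = (n+1,…,1)) and the right-hand sides are defined from ℤ^n. -/

import Mathlib

open Finset Polynomial

noncomputable section

/-- The standard basis vector `ε_i` of `ℤ^n`. -/
def eps (n : ℕ) (i : Fin n) : Fin n → ℤ := Pi.single i 1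

/-- Pairs `(i,j)` with `i < j`. -/
def pairsLt (n : ℕ) : Finset (Fin n × Fin n) :=
  Finset.univ.filter fun p => p.1 < p.2

/-- Pairs `(i,j)` with `i ≤ j`. -/
def pairsLe (n : ℕ) : Finset (Fin n × Fin n) :=
  Finset.univ.filter fun p => p.1 ≤ p.2

/-- Positive roots of type `A_{n-1}`: the `ε_i - ε_j`, `i < j`. -/
def RA (n : ℕ) : Finset (Fin n → ℤ) :=
  (pairsLt n).image fun p => eps n p.1 - eps n p.2

/-- Positive roots of type `D_n`: the `ε_i - ε_j` and `ε_i + ε_j`, `i < j`. -/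
def RD (n : ℕ) : Finset (Fin n → ℤ) :=
  RA n ∪ ((pairsLt n).image fun p => eps n p.1 + eps n p.2)

/-- Positive roots of type `C_n`: those of `D_n` together with the `2ε_i`. -/
def RC (n : ℕ) : Finset (Fin n → ℤ) :=
  RD n ∪ (Finset.univ.image fun i : Fin n => (2 : ℤ) • eps n i)

/-- Positive roots of type `B_n`: those of `D_n` together with the `ε_i`. -/
def RB (n : ℕ) : Finset (Fin n → ℤ) :=
  RD n ∪ (Finset.univ.image fun i : Fin n => eps n i)

/-- The `q`-partition function attached to a finite set `R` of positive roots: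
`P_q(β) = Σ_m q^{Σ_α m(α)}`, the sum over the (finitely many) functions
`m : R → ℕ` with `Σ_α m(α)·α = β`. -/
def Pq (n : ℕ) (R : Finset (Fin n → ℤ)) (β : Fin n → ℤ) : Polynomial ℤ :=
  ∑ᶠ m ∈ {m : (Fin n → ℤ) → ℕ |
      (∀ α, α ∉ R → m α = 0) ∧ ∑ α ∈ R, m α • α = β},
    (X : Polynomial ℤ) ^ ∑ α ∈ R, m α

/-- `ρ_n = (n, n-1, ..., 1)`. -/
def rho (n : ℕ) : Fin n → ℤ := fun i => (n : ℤ) - ((i : ℕ) : ℤ)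

/-- `ρ_{D_n} = (n-1, n-2, ..., 0)`. -/
def rhoD (n : ℕ) : Fin n → ℤ := fun i => (n : ℤ) - ((i : ℕ) : ℤ) - 1

/-- The restricted alternating sum `K̃_{λ,μ}(q) = Σ_{σ ∈ S_n} sgn(σ) P_q(σ(λ+ρ_n) - (μ+ρ_n))`
attached to a set `R` of positive roots.  For `R = RA n` this is the type `A_{n-1}`
Kostka-Foulkes polynomial `K^{A_{n-1}}_{λ,μ}(q)`. -/
def KT (n : ℕ) (R : Finset (Fin n → ℤ)) (lam mu : Fin n → ℤ) : Polynomial ℤ :=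
  ∑ σ : Equiv.Perm (Fin n),
    (Equiv.Perm.sign σ : ℤ) •
      Pq n R (fun i => (lam + rho n) (σ i) - (mu + rho n) i)

/-- The type `C_n` Kostka-Foulkes polynomial: the alternating sum over the
hyperoctahedral group `W_{C_n}` (signed permutations, a signed permutation being
encoded as a pair `(σ, e)` acting by `v ↦ (i ↦ e i * v (σ i))`, whose determinant
is `sgn(σ) * ∏ i, e i`), with `ρ_{C_n} = ρ_n`. -/
def KC (n : ℕ) (lam mu : Fin n → ℤ) : Polynomial ℤ :=
  ∑ σ : Equiv.Perm (Fin n), ∑ e : Fin n → ℤˣ,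
    ((Equiv.Perm.sign σ : ℤ) * ∏ i, (e i : ℤ)) •
      Pq n (RC n) (fun i => (e i : ℤ) * (lam + rho n) (σ i) - (mu + rho n) i)

/-- The type `D_n` Kostka-Foulkes polynomial: the alternating sum over `W_{D_n}`
(signed permutations with an even number of sign changes), with `ρ_{D_n} = (n-1, ..., 0)`. -/
def KD (n : ℕ) (lam mu : Fin n → ℤ) : Polynomial ℤ :=
  ∑ σ : Equiv.Perm (Fin n),
    ∑ e ∈ Finset.univ.filter (fun e : Fin n → ℤˣ => ∏ i, e i = 1),
      ((Equiv.Perm.sign σ : ℤ) * ∏ i, (e i : ℤ)) •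
        Pq n (RD n) (fun i => (e i : ℤ) * (lam + rhoD n) (σ i) - (mu + rhoD n) i)

/-- `c(δ)`: the number of families `(e_{rs})_{1 ≤ r ≤ s ≤ n}` of nonnegative integers
with `Σ_{r ≤ s} e_{rs} (ε_r + ε_s) = δ`. -/
def cC (n : ℕ) (δ : Fin n → ℤ) : ℕ :=
  Set.ncard {e : Fin n × Fin n → ℕ |
    (∀ p, p ∉ pairsLe n → e p = 0) ∧
    ∑ p ∈ pairsLe n, e p • (eps n p.1 + eps n p.2) = δ}

/-- `d(δ)`: the number of families `(e_{rs})_{1 ≤ r < s ≤ n}` of nonnegative integers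
with `Σ_{r < s} e_{rs} (ε_r + ε_s) = δ`. -/
def dD (n : ℕ) (δ : Fin n → ℤ) : ℕ :=
  Set.ncard {e : Fin n × Fin n → ℕ |
    (∀ p, p ∉ pairsLt n → e p = 0) ∧
    ∑ p ∈ pairsLt n, e p • (eps n p.1 + eps n p.2) = δ}

/-- `f_q(β)`: the coefficient of `x^β` in
`∏_{i<j} (1 - q x_i/x_j)⁻¹ ∏_{r<s} (1 - q/(x_r x_s))⁻¹`, i.e. the sum of
`q^{Σ a + Σ b}` over families `a = (a_{ij})_{i<j}`, `b = (b_{rs})_{r<s}` of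
nonnegative integers with `Σ a_{ij}(ε_i - ε_j) - Σ b_{rs}(ε_r + ε_s) = β`. -/
def fq (n : ℕ) (β : Fin n → ℤ) : Polynomial ℤ :=
  ∑ᶠ ab ∈ {ab : ((Fin n × Fin n) → ℕ) × ((Fin n × Fin n) → ℕ) |
      (∀ p, p ∉ pairsLt n → ab.1 p = 0) ∧ (∀ p, p ∉ pairsLt n → ab.2 p = 0) ∧
      ((∑ p ∈ pairsLt n, ab.1 p • (eps n p.1 - eps n p.2)) -
        ∑ p ∈ pairsLt n, ab.2 p • (eps n p.1 + eps n p.2)) = β},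
    (X : Polynomial ℤ) ^ ((∑ p ∈ pairsLt n, ab.1 p) + ∑ p ∈ pairsLt n, ab.2 p)

/-- `F_q(β)`: the coefficient of `x^β` in
`∏_{i<j} (1 - q x_i/x_j)⁻¹ ∏_{r≤s} (1 - q/(x_r x_s))⁻¹`, i.e. the sum of
`q^{Σ a + Σ b}` over families `a = (a_{ij})_{i<j}`, `b = (b_{rs})_{r≤s}` of
nonnegative integers with `Σ a_{ij}(ε_i - ε_j) - Σ b_{rs}(ε_r + ε_s) = β`. -/
def Fq (n : ℕ) (β : Fin n → ℤ) : Polynomial ℤ :=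
  ∑ᶠ ab ∈ {ab : ((Fin n × Fin n) → ℕ) × ((Fin n × Fin n) → ℕ) |
      (∀ p, p ∉ pairsLt n → ab.1 p = 0) ∧ (∀ p, p ∉ pairsLe n → ab.2 p = 0) ∧
      ((∑ p ∈ pairsLt n, ab.1 p • (eps n p.1 - eps n p.2)) -
        ∑ p ∈ pairsLe n, ab.2 p • (eps n p.1 + eps n p.2)) = β},
    (X : Polynomial ℤ) ^ ((∑ p ∈ pairsLt n, ab.1 p) + ∑ p ∈ pairsLe n, ab.2 p)

/-- The `q`-multiplicity `u_{λ,μ}(q) = Σ_{σ ∈ S_n} sgn(σ) f_q(σ(λ+ρ_n) - (μ+ρ_n))`. -/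
def uP (n : ℕ) (lam mu : Fin n → ℤ) : Polynomial ℤ :=
  ∑ σ : Equiv.Perm (Fin n),
    (Equiv.Perm.sign σ : ℤ) •
      fq n (fun i => (lam + rho n) (σ i) - (mu + rho n) i)

/-- The `q`-multiplicity `U_{λ,μ}(q) = Σ_{σ ∈ S_n} sgn(σ) F_q(σ(λ+ρ_n) - (μ+ρ_n))`. -/
def UP (n : ℕ) (lam mu : Fin n → ℤ) : Polynomial ℤ :=
  ∑ σ : Equiv.Perm (Fin n),
    (Equiv.Perm.sign σ : ℤ) •
      Fq n (fun i => (lam + rho n) (σ i) - (mu + rho n) i)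

/-- `1_ℕ(β) = 1` if all coordinates of `β` are nonnegative, and `0` otherwise. -/
def indNat (n : ℕ) (v : Fin n → ℤ) : ℤ := if ∀ i, 0 ≤ v i then 1 else 0

/-- The branching coefficient `b_{λ,ν} = Σ_{σ ∈ S_n} sgn(σ) 1_ℕ(σ(λ+ρ_n) - (ν+ρ_n))`. -/
def bcoef (n : ℕ) (lam nu : Fin n → ℤ) : ℤ :=
  ∑ σ : Equiv.Perm (Fin n),
    (Equiv.Perm.sign σ : ℤ) *
      indNat n (fun i => (lam + rho n) (σ i) - (nu + rho n) i)

/-- The coefficient of `q^j` (for `j : ℤ`) in a polynomial: `0` for negative `j`. -/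
def zcoeff (p : Polynomial ℤ) (j : ℤ) : ℤ := if 0 ≤ j then p.coeff j.toNat else 0

/-- The conjugate partition, padded with zeros to length `n`:
`λ'_i = #{j : λ_j ≥ i}` (for the `i`-th coordinate, `i = 1, ..., n`). -/
def conj (n : ℕ) (lam : Fin n → ℤ) : Fin n → ℤ :=
  fun i => ((Finset.univ.filter fun j : Fin n => ((i : ℕ) : ℤ) + 1 ≤ lam j).card : ℤ)

end

/-! ### Auxiliary material for the stability theorem -/

noncomputable section StabilityAux

open Equiv

/-- The solution set underlying `fq`/`Fq`, with the second index set a parameter. -/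
def sol (n : ℕ) (T : Finset (Fin n × Fin n)) (β : Fin n → ℤ) :
    Set (((Fin n × Fin n) → ℕ) × ((Fin n × Fin n) → ℕ)) :=
  {ab | (∀ p, p ∉ pairsLt n → ab.1 p = 0) ∧ (∀ p, p ∉ T → ab.2 p = 0) ∧
      ((∑ p ∈ pairsLt n, ab.1 p • (eps n p.1 - eps n p.2)) -
        ∑ p ∈ T, ab.2 p • (eps n p.1 + eps n p.2)) = β}

/-- Common generalization of `fq` and `Fq`. -/
def gq (n : ℕ) (T : Finset (Fin n × Fin n)) (β : Fin n → ℤ) : Polynomial ℤ :=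
  ∑ᶠ ab ∈ sol n T β,
    (X : Polynomial ℤ) ^ ((∑ p ∈ pairsLt n, ab.1 p) + ∑ p ∈ T, ab.2 p)

lemma fq_eq_gq (n : ℕ) : fq n = gq n (pairsLt n) := rfl

lemma Fq_eq_gq (n : ℕ) : Fq n = gq n (pairsLe n) := rfl

lemma mem_pairsLt {n : ℕ} (p : Fin n × Fin n) : p ∈ pairsLt n ↔ p.1 < p.2 := by
  simp [pairsLt]

lemma mem_pairsLe {n : ℕ} (p : Fin n × Fin n) : p ∈ pairsLe n ↔ p.1 ≤ p.2 := by
  simp [pairsLe]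

lemma pairsLt_le {n : ℕ} : ∀ p ∈ pairsLt (n + 1), p.1 ≤ p.2 :=
  fun p hp => ((mem_pairsLt p).mp hp).le

lemma pairsLe_le {n : ℕ} : ∀ p ∈ pairsLe (n + 1), p.1 ≤ p.2 :=
  fun p hp => (mem_pairsLe p).mp hp

lemma pairsLt_cs {n : ℕ} :
    ∀ q : Fin n × Fin n, (q.1.castSucc, q.2.castSucc) ∈ pairsLt (n + 1) ↔ q ∈ pairsLt n := by
  intro q
  simp [mem_pairsLt, Fin.castSucc_lt_castSucc_iff]

lemma pairsLe_cs {n : ℕ} :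
    ∀ q : Fin n × Fin n, (q.1.castSucc, q.2.castSucc) ∈ pairsLe (n + 1) ↔ q ∈ pairsLe n := by
  intro q
  simp [mem_pairsLe, Fin.castSucc_le_castSucc_iff]

lemma eps_cs_cs {n : ℕ} (i j : Fin n) : eps (n + 1) i.castSucc j.castSucc = eps n i j := by
  simp only [eps, Pi.single_apply, Fin.castSucc_inj]

lemma eps_cs_last {n : ℕ} (i : Fin n) : eps (n + 1) i.castSucc (Fin.last n) = 0 := by
  simp [eps, Pi.single_apply, (Fin.castSucc_lt_last i).ne']

/-- Summation over an `(n+1)`-index set reduces to the `n`-index set when the summand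
vanishes on the last column. -/
lemma sum_last_col {M : Type*} [AddCommMonoid M] {n : ℕ}
    (U : Finset (Fin n × Fin n)) (U' : Finset (Fin (n + 1) × Fin (n + 1)))
    (h1 : ∀ p ∈ U', p.1 ≤ p.2)
    (h2 : ∀ q : Fin n × Fin n, (q.1.castSucc, q.2.castSucc) ∈ U' ↔ q ∈ U)
    (g : Fin (n + 1) × Fin (n + 1) → M)
    (hg : ∀ p ∈ U', p.2 = Fin.last n → g p = 0) :
    ∑ p ∈ U', g p = ∑ q ∈ U, g (q.1.castSucc, q.2.castSucc) := by
  rw [← Finset.sum_filter_of_ne (p := fun p : Fin (n + 1) × Fin (n + 1) => p.2 ≠ Fin.last n)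
      (fun x hx hgx hl => hgx (hg x hx hl))]
  have himg : U'.filter (fun p => p.2 ≠ Fin.last n) =
      U.image (fun q : Fin n × Fin n => (q.1.castSucc, q.2.castSucc)) := by
    ext p
    simp only [Finset.mem_filter, Finset.mem_image]
    constructor
    · rintro ⟨hp, h2l⟩
      have h1l : p.1 ≠ Fin.last n := by
        intro h
        exact h2l (Fin.last_le_iff.mp (h ▸ h1 p hp))
      refine ⟨(p.1.castPred h1l, p.2.castPred h2l), ?_, ?_⟩
      · exact (h2 _).mp (by simpa [Fin.castSucc_castPred] using hp)
      · simp [Fin.castSucc_castPred]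
    · rintro ⟨q, hq, rfl⟩
      exact ⟨(h2 q).mpr hq, (Fin.castSucc_lt_last q.2).ne⟩
  rw [himg, Finset.sum_image]
  intro x _ y _ hxy
  have := Prod.ext_iff.mp hxy
  exact Prod.ext (Fin.castSucc_inj.mp this.1) (Fin.castSucc_inj.mp this.2)

/-- Extension by zero of a family indexed by pairs. -/
def extF {n : ℕ} (c : Fin n × Fin n → ℕ) : Fin (n + 1) × Fin (n + 1) → ℕ :=
  fun p => if h : p.1 ≠ Fin.last n ∧ p.2 ≠ Fin.last n
    then c (p.1.castPred h.1, p.2.castPred h.2) else 0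

lemma extF_apply_of {n : ℕ} (c : Fin n × Fin n → ℕ) (p : Fin (n + 1) × Fin (n + 1))
    (h : p.1 ≠ Fin.last n ∧ p.2 ≠ Fin.last n) :
    extF c p = c (p.1.castPred h.1, p.2.castPred h.2) := dif_pos h

lemma extF_cs {n : ℕ} (c : Fin n × Fin n → ℕ) (q : Fin n × Fin n) :
    extF c (q.1.castSucc, q.2.castSucc) = c q := by
  rw [extF, dif_pos ⟨(Fin.castSucc_lt_last _).ne, (Fin.castSucc_lt_last _).ne⟩]
  simp

lemma extF_last {n : ℕ} (c : Fin n × Fin n → ℕ) (p : Fin (n + 1) × Fin (n + 1))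
    (h : p.1 = Fin.last n ∨ p.2 = Fin.last n) : extF c p = 0 := by
  rw [extF, dif_neg]
  tauto

lemma extF_restrict {n : ℕ} (c : Fin (n + 1) × Fin (n + 1) → ℕ)
    (hc : ∀ p : Fin (n + 1) × Fin (n + 1), p.1 = Fin.last n ∨ p.2 = Fin.last n → c p = 0) :
    extF (fun q : Fin n × Fin n => c (q.1.castSucc, q.2.castSucc)) = c := by
  funext p
  by_cases hcase : p.1 ≠ Fin.last n ∧ p.2 ≠ Fin.last n
  · rw [extF, dif_pos hcase]
    simp [Fin.castSucc_castPred]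
  · rw [extF, dif_neg hcase, eq_comm]
    apply hc
    by_cases h1 : p.1 = Fin.last n
    · exact Or.inl h1
    · exact Or.inr (by tauto)

lemma extF_injective {n : ℕ} : Function.Injective (extF (n := n)) := by
  intro c d h
  funext q
  have := congrFun h (q.1.castSucc, q.2.castSucc)
  rwa [extF_cs, extF_cs] at this

/-- Analysis of the equation in `sol` at the last coordinate. -/
lemma last_analysis {n : ℕ} (T' : Finset (Fin (n + 1) × Fin (n + 1)))
    (a b : Fin (n + 1) × Fin (n + 1) → ℕ) (β : Fin (n + 1) → ℤ)
    (heq : ((∑ p ∈ pairsLt (n + 1), a p • (eps (n + 1) p.1 - eps (n + 1) p.2)) -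
        ∑ p ∈ T', b p • (eps (n + 1) p.1 + eps (n + 1) p.2)) = β) :
    β (Fin.last n) ≤ 0 ∧
      (β (Fin.last n) = 0 →
        (∀ p ∈ pairsLt (n + 1), p.2 = Fin.last n → a p = 0) ∧
        (∀ p ∈ T', p.1 = Fin.last n ∨ p.2 = Fin.last n → b p = 0)) := by
  have h := congrFun heq (Fin.last n)
  simp only [Finset.sum_apply, Pi.smul_apply, Pi.sub_apply, Pi.add_apply, Pi.mul_apply,
    Pi.natCast_apply, smul_eq_mul, eps, Pi.single_apply, nsmul_eq_mul] at h
  have hta : ∀ p ∈ pairsLt (n + 1),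
      ((a p : ℤ) * ((if Fin.last n = p.1 then 1 else 0) - if Fin.last n = p.2 then 1 else 0)) ≤ 0 := by
    intro p hp
    have h1l : Fin.last n ≠ p.1 := by
      intro e
      have hlt := (mem_pairsLt p).mp hp
      have := hlt.trans_le (Fin.le_last p.2)
      rw [← e] at this
      exact absurd this (lt_irrefl _)
    rw [if_neg h1l]
    by_cases h2 : Fin.last n = p.2 <;> simp [h2]
  have htb : ∀ p ∈ T', (0:ℤ) ≤
      ((b p : ℤ) * ((if Fin.last n = p.1 then 1 else 0) + if Fin.last n = p.2 then 1 else 0)) := by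
    intro p _
    apply mul_nonneg (Int.natCast_nonneg _)
    apply add_nonneg <;> (split <;> norm_num)
  have hSa := Finset.sum_nonpos hta
  have hSb := Finset.sum_nonneg htb
  constructor
  · linarith
  · intro h0
    rw [h0] at h
    have hSa0 : (∑ p ∈ pairsLt (n + 1), ((a p : ℤ) *
        ((if Fin.last n = p.1 then 1 else 0) - if Fin.last n = p.2 then 1 else 0))) = 0 := by
      linarith
    have hSb0 : (∑ p ∈ T', ((b p : ℤ) *
        ((if Fin.last n = p.1 then 1 else 0) + if Fin.last n = p.2 then 1 else 0))) = 0 := by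
      linarith
    constructor
    · intro p hp hl
      have hterm := (Finset.sum_eq_zero_iff_of_nonpos hta).mp hSa0 p hp
      have h1l : Fin.last n ≠ p.1 := by
        intro e
        have hlt := (mem_pairsLt p).mp hp
        have := hlt.trans_le (Fin.le_last p.2)
        rw [← e] at this
        exact absurd this (lt_irrefl _)
      rw [if_neg h1l, if_pos hl.symm] at hterm
      simpa using hterm
    · intro p hp hl
      have hterm := (Finset.sum_eq_zero_iff_of_nonneg htb).mp hSb0 p hp
      rcases hl with hl | hl
      · rw [if_pos hl.symm] at hterm
        have : (0:ℤ) ≤ if Fin.last n = p.2 then 1 else 0 := by split <;> norm_num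
        have hb0 : (b p : ℤ) = 0 := by nlinarith [Int.natCast_nonneg (b p)]
        exact_mod_cast hb0
      · rw [if_pos hl.symm] at hterm
        have : (0:ℤ) ≤ if Fin.last n = p.1 then 1 else 0 := by split <;> norm_num
        have hb0 : (b p : ℤ) = 0 := by nlinarith [Int.natCast_nonneg (b p)]
        exact_mod_cast hb0

lemma gq_zero {n : ℕ} (T' : Finset (Fin (n + 1) × Fin (n + 1)))
    {β : Fin (n + 1) → ℤ} (hβ : 0 < β (Fin.last n)) : gq (n + 1) T' β = 0 := by
  have hempty : sol (n + 1) T' β = ∅ := by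
    ext ab
    simp only [sol, Set.mem_setOf_eq, Set.mem_empty_iff_false, iff_false, not_and]
    intro _ _ heq
    have := (last_analysis T' ab.1 ab.2 β heq).1
    linarith
  rw [gq, hempty, finsum_mem_empty]

/-- The vector-level transfer identity for last-column-vanishing families. -/
lemma vec_transfer {n : ℕ}
    (U : Finset (Fin n × Fin n)) (U' : Finset (Fin (n + 1) × Fin (n + 1)))
    (h1 : ∀ p ∈ U', p.1 ≤ p.2)
    (h2 : ∀ q : Fin n × Fin n, (q.1.castSucc, q.2.castSucc) ∈ U' ↔ q ∈ U)
    (a b : Fin (n + 1) × Fin (n + 1) → ℕ)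
    (hA : ∀ p : Fin (n + 1) × Fin (n + 1), p.1 = Fin.last n ∨ p.2 = Fin.last n → a p = 0)
    (hB : ∀ p : Fin (n + 1) × Fin (n + 1), p.1 = Fin.last n ∨ p.2 = Fin.last n → b p = 0) :
    ((∑ p ∈ pairsLt (n + 1), a p • (eps (n + 1) p.1 - eps (n + 1) p.2)) -
        ∑ p ∈ U', b p • (eps (n + 1) p.1 + eps (n + 1) p.2)) =
      Fin.snoc
        ((∑ q ∈ pairsLt n, a (q.1.castSucc, q.2.castSucc) • (eps n q.1 - eps n q.2)) -
          ∑ q ∈ U, b (q.1.castSucc, q.2.castSucc) • (eps n q.1 + eps n q.2)) 0 := by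
  rw [sum_last_col (pairsLt n) (pairsLt (n + 1)) pairsLt_le pairsLt_cs
        (fun p => a p • (eps (n + 1) p.1 - eps (n + 1) p.2))
        (fun p _ hl => by simp only [hA p (Or.inr hl), zero_smul]),
      sum_last_col U U' h1 h2
        (fun p => b p • (eps (n + 1) p.1 + eps (n + 1) p.2))
        (fun p _ hl => by simp only [hB p (Or.inr hl), zero_smul])]
  funext i
  refine Fin.lastCases ?_ (fun j => ?_) i
  · simp [Finset.sum_apply, eps_cs_last]
  · simp [Finset.sum_apply, eps_cs_cs]

/-- The solution set for `Fin.snoc β 0` is the image by extension of the `n`-dimensional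
solution set. -/
lemma sol_snoc {n : ℕ}
    (U : Finset (Fin n × Fin n)) (U' : Finset (Fin (n + 1) × Fin (n + 1)))
    (h1 : ∀ p ∈ U', p.1 ≤ p.2)
    (h2 : ∀ q : Fin n × Fin n, (q.1.castSucc, q.2.castSucc) ∈ U' ↔ q ∈ U)
    (β : Fin n → ℤ) :
    sol (n + 1) U' (Fin.snoc β 0) =
      (fun ab : ((Fin n × Fin n) → ℕ) × ((Fin n × Fin n) → ℕ) => (extF ab.1, extF ab.2)) ''
        sol n U β := by
  ext ab
  constructor
  · rintro ⟨ha, hb, heq⟩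
    obtain ⟨hA', hB'⟩ := (last_analysis U' ab.1 ab.2 _ heq).2 (by simp)
    have hA : ∀ p : Fin (n + 1) × Fin (n + 1),
        p.1 = Fin.last n ∨ p.2 = Fin.last n → ab.1 p = 0 := by
      intro p hp
      by_cases hm : p ∈ pairsLt (n + 1)
      · have hlt := (mem_pairsLt p).mp hm
        have hp1 : p.1 ≠ Fin.last n := by
          intro e
          have := hlt.trans_le (Fin.le_last p.2)
          rw [e] at this
          exact absurd this (lt_irrefl _)
        exact hA' p hm (hp.resolve_left hp1)
      · exact ha p hm
    have hB : ∀ p : Fin (n + 1) × Fin (n + 1),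
        p.1 = Fin.last n ∨ p.2 = Fin.last n → ab.2 p = 0 := by
      intro p hp
      by_cases hm : p ∈ U'
      · exact hB' p hm hp
      · exact hb p hm
    refine ⟨(fun q : Fin n × Fin n => ab.1 (q.1.castSucc, q.2.castSucc),
             fun q : Fin n × Fin n => ab.2 (q.1.castSucc, q.2.castSucc)), ⟨?_, ?_, ?_⟩, ?_⟩
    · intro q hq
      exact ha _ (fun hm => hq ((pairsLt_cs q).mp hm))
    · intro q hq
      exact hb _ (fun hm => hq ((h2 q).mp hm))
    · have htr := vec_transfer U U' h1 h2 ab.1 ab.2 hA hB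
      rw [heq] at htr
      funext j
      have := congrFun htr j.castSucc
      rw [Fin.snoc_castSucc, Fin.snoc_castSucc] at this
      exact this.symm
    · exact Prod.ext (extF_restrict ab.1 hA) (extF_restrict ab.2 hB)
  · rintro ⟨cd, ⟨ha, hb, heq⟩, rfl⟩
    dsimp only
    have hA : ∀ p : Fin (n + 1) × Fin (n + 1),
        p.1 = Fin.last n ∨ p.2 = Fin.last n → extF cd.1 p = 0 := fun p hp => extF_last _ _ hp
    have hB : ∀ p : Fin (n + 1) × Fin (n + 1),
        p.1 = Fin.last n ∨ p.2 = Fin.last n → extF cd.2 p = 0 := fun p hp => extF_last _ _ hp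
    refine ⟨?_, ?_, ?_⟩
    · intro p hp
      show extF cd.1 p = 0
      by_cases hcase : p.1 ≠ Fin.last n ∧ p.2 ≠ Fin.last n
      · rw [extF_apply_of _ _ hcase]
        apply ha
        intro hm
        apply hp
        have := (pairsLt_cs _).mpr hm
        rwa [Fin.castSucc_castPred, Fin.castSucc_castPred] at this
      · exact extF_last _ _ (by tauto)
    · intro p hp
      show extF cd.2 p = 0
      by_cases hcase : p.1 ≠ Fin.last n ∧ p.2 ≠ Fin.last n
      · rw [extF_apply_of _ _ hcase]
        apply hb
        intro hm
        apply hp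
        have := (h2 _).mpr hm
        rwa [Fin.castSucc_castPred, Fin.castSucc_castPred] at this
      · exact extF_last _ _ (by tauto)
    · show ((∑ p ∈ pairsLt (n + 1), extF cd.1 p • (eps (n + 1) p.1 - eps (n + 1) p.2)) -
          ∑ p ∈ U', extF cd.2 p • (eps (n + 1) p.1 + eps (n + 1) p.2)) = Fin.snoc β 0
      rw [vec_transfer U U' h1 h2 (extF cd.1) (extF cd.2) hA hB]
      simp only [extF_cs]
      rw [heq]

lemma gq_snoc {n : ℕ}
    (U : Finset (Fin n × Fin n)) (U' : Finset (Fin (n + 1) × Fin (n + 1)))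
    (h1 : ∀ p ∈ U', p.1 ≤ p.2)
    (h2 : ∀ q : Fin n × Fin n, (q.1.castSucc, q.2.castSucc) ∈ U' ↔ q ∈ U)
    (β : Fin n → ℤ) :
    gq (n + 1) U' (Fin.snoc β 0) = gq n U β := by
  have hinj : Function.Injective
      (fun ab : ((Fin n × Fin n) → ℕ) × ((Fin n × Fin n) → ℕ) => (extF ab.1, extF ab.2)) := by
    intro ab cd h
    rw [Prod.ext_iff] at h
    exact Prod.ext (extF_injective h.1) (extF_injective h.2)
  rw [gq, gq, sol_snoc U U' h1 h2 β, finsum_mem_image (hinj.injOn)]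
  apply finsum_mem_congr rfl
  intro ab _
  congr 1
  rw [sum_last_col (pairsLt n) (pairsLt (n + 1)) pairsLt_le pairsLt_cs (extF ab.1)
        (fun p _ hl => extF_last _ _ (Or.inr hl)),
      sum_last_col U U' h1 h2 (extF ab.2)
        (fun p _ hl => extF_last _ _ (Or.inr hl))]
  simp only [extF_cs]

/-- Embedding of `Perm (Fin n)` into `Perm (Fin (n+1))` fixing the last element. -/
def EP {n : ℕ} (σ : Equiv.Perm (Fin n)) : Equiv.Perm (Fin (n + 1)) :=
  (finSuccEquivLast.symm).permCongr σ.optionCongr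

lemma EP_apply {n : ℕ} (σ : Equiv.Perm (Fin n)) (x : Fin (n + 1)) :
    EP σ x = finSuccEquivLast.symm (σ.optionCongr (finSuccEquivLast x)) := by
  simp [EP, Equiv.permCongr_apply]

lemma EP_castSucc {n : ℕ} (σ : Equiv.Perm (Fin n)) (j : Fin n) :
    EP σ j.castSucc = (σ j).castSucc := by
  rw [EP_apply]
  simp

lemma EP_last {n : ℕ} (σ : Equiv.Perm (Fin n)) : EP σ (Fin.last n) = Fin.last n := by
  rw [EP_apply]
  simp

lemma EP_sign {n : ℕ} (σ : Equiv.Perm (Fin n)) :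
    Equiv.Perm.sign (EP σ) = Equiv.Perm.sign σ := by
  rw [EP, Equiv.Perm.sign_permCongr, Equiv.optionCongr_sign]

/-- Inverse of `EP` on permutations fixing the last element. -/
def DP {n : ℕ} (σ : Equiv.Perm (Fin (n + 1))) : Equiv.Perm (Fin n) :=
  Equiv.removeNone (finSuccEquivLast.permCongr σ)

lemma EP_eq_symm {n : ℕ} (σ : Equiv.Perm (Fin n)) :
    EP σ = (finSuccEquivLast.permCongr).symm σ.optionCongr := by
  rw [EP, Equiv.permCongr_symm]

lemma DP_EP {n : ℕ} (σ : Equiv.Perm (Fin n)) : DP (EP σ) = σ := by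
  have h : finSuccEquivLast.permCongr (EP σ) = σ.optionCongr := by
    rw [EP_eq_symm, Equiv.apply_symm_apply]
  rw [DP, h]
  apply Equiv.optionCongr_injective
  have h2 := map_equiv_removeNone σ.optionCongr
  simpa using h2

lemma EP_DP {n : ℕ} (σ : Equiv.Perm (Fin (n + 1))) (hσ : σ (Fin.last n) = Fin.last n) :
    EP (DP σ) = σ := by
  have hτ : finSuccEquivLast.permCongr σ none = none := by
    simp [Equiv.permCongr_apply, hσ]
  have h2 := map_equiv_removeNone (finSuccEquivLast.permCongr σ)
  rw [hτ, Equiv.swap_self, ← Equiv.Perm.one_def, one_mul] at h2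
  rw [EP_eq_symm, DP, h2, Equiv.symm_apply_apply]

/-- The main summation identity, for parametrized `gq`. -/
lemma key_sum {n : ℕ}
    (T : Finset (Fin n × Fin n)) (T' : Finset (Fin (n + 1) × Fin (n + 1)))
    (h1 : ∀ p ∈ T', p.1 ≤ p.2)
    (h2 : ∀ q : Fin n × Fin n, (q.1.castSucc, q.2.castSucc) ∈ T' ↔ q ∈ T)
    (lam mu : Fin n → ℤ) (hlam0 : ∀ i, 0 ≤ lam i) :
    ∑ σ : Equiv.Perm (Fin (n + 1)), (Equiv.Perm.sign σ : ℤ) •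
        gq (n + 1) T' (fun i => ((Fin.snoc lam 0 : Fin (n + 1) → ℤ) + rho (n + 1)) (σ i) -
          ((Fin.snoc mu 0 : Fin (n + 1) → ℤ) + rho (n + 1)) i)
      = ∑ σ : Equiv.Perm (Fin n), (Equiv.Perm.sign σ : ℤ) •
        gq n T (fun i => (lam + rho n) (σ i) - (mu + rho n) i) := by
  have hzero : ∀ σ : Equiv.Perm (Fin (n + 1)), σ (Fin.last n) ≠ Fin.last n →
      gq (n + 1) T' (fun i => ((Fin.snoc lam 0 : Fin (n + 1) → ℤ) + rho (n + 1)) (σ i) -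
        ((Fin.snoc mu 0 : Fin (n + 1) → ℤ) + rho (n + 1)) i) = 0 := by
    intro σ hσ
    apply gq_zero
    obtain ⟨j, hj⟩ := Fin.exists_castSucc_eq.mpr hσ
    show 0 < ((Fin.snoc lam 0 : Fin (n + 1) → ℤ) + rho (n + 1)) (σ (Fin.last n)) -
      ((Fin.snoc mu 0 : Fin (n + 1) → ℤ) + rho (n + 1)) (Fin.last n)
    rw [← hj]
    simp only [Pi.add_apply, Fin.snoc_castSucc, Fin.snoc_last, rho, Fin.coe_castSucc,
      Fin.val_last]
    have hl := hlam0 j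
    have hjn : (j : ℕ) < n := j.isLt
    push_cast
    omega
  rw [← Finset.sum_filter_of_ne
      (p := fun σ : Equiv.Perm (Fin (n + 1)) => σ (Fin.last n) = Fin.last n)
      (fun σ _ hne => by
        by_contra hc
        exact hne (by rw [hzero σ hc, smul_zero]))]
  refine (Finset.sum_nbij' (i := fun σ : Equiv.Perm (Fin n) => EP σ)
    (j := fun σ : Equiv.Perm (Fin (n + 1)) => DP σ) ?_ ?_ ?_ ?_ ?_).symm
  · intro σ _
    simp [EP_last]
  · intro σ _
    exact Finset.mem_univ _
  · intro σ _
    exact DP_EP σ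
  · intro σ hσ
    exact EP_DP σ (by simpa using hσ)
  · intro σ _
    have hvec : (fun i => ((Fin.snoc lam 0 : Fin (n + 1) → ℤ) + rho (n + 1)) (EP σ i) -
        ((Fin.snoc mu 0 : Fin (n + 1) → ℤ) + rho (n + 1)) i) =
        Fin.snoc (fun i => (lam + rho n) (σ i) - (mu + rho n) i) 0 := by
      funext i
      refine Fin.lastCases ?_ (fun j => ?_) i
      · rw [EP_last]
        simp [rho]
      · rw [EP_castSucc]
        simp only [Pi.add_apply, Fin.snoc_castSucc, rho, Fin.coe_castSucc, Fin.val_last]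
        push_cast
        ring
    rw [EP_sign, hvec, gq_snoc T T' h1 h2]

end StabilityAux

/-- for partitions `λ, μ` of length `n`, appending a zero part leaves
`u` and `U` unchanged: `u_{λ^#,μ^#}(q) = u_{λ,μ}(q)` and `U_{λ^#,μ^#}(q) = U_{λ,μ}(q)`,
where `λ^# = (λ_1, ..., λ_n, 0)` and `μ^# = (μ_1, ..., μ_n, 0)`. -/
theorem u_and_U_stable (n : ℕ) (lam mu : Fin n → ℤ)
    (hlam : Antitone lam) (hlam0 : ∀ i, 0 ≤ lam i)
    (hmu : Antitone mu) (hmu0 : ∀ i, 0 ≤ mu i) :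
    uP (n + 1) (Fin.snoc lam 0) (Fin.snoc mu 0) = uP n lam mu ∧
    UP (n + 1) (Fin.snoc lam 0) (Fin.snoc mu 0) = UP n lam mu := by
  refine ⟨?_, ?_⟩
  · exact key_sum (pairsLt n) (pairsLt (n + 1)) pairsLt_le pairsLt_cs lam mu hlam0
  · exact key_sum (pairsLe n) (pairsLe (n + 1)) pairsLe_le pairsLe_cs lam mu hlam0
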